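/- arXiv:2506.08092 — 2 statements merged into one kernel-verified Lean document; each statement's English description precedes it below -/
import Mathlib

section
/- The DGBR phase-space point operators are the Hermitian parts of the KD phase-space point operators: A_{g,χ} = (1/2)(B_{g,χ} + B_{g,χ}†), where B_{g,χ} = |χ⟩⟨χ|g⟩⟨g| and A_{g,χ} = P_{g,χ} A_{0,0} P_{g,χ}† with A_{0,0} = 2^{-2n} Σ_{u·v = 0 mod 2} P_{u,v}. -/
open scoped BigOperators
open Matrix Kronecker

noncomputable section

/-- The group `G = (ℤ/2ℤ)^n` indexing the computational basis of `(ℂ²)^{⊗n}`. -/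
abbrev G (n : ℕ) : Type := Fin n → ZMod 2

/-- Mod-2 dot product. -/
def dot {n : ℕ} (u v : G n) : ZMod 2 := ∑ j, u j * v j

/-- `(-1)^x` for `x : ZMod 2`. -/
def sgn (x : ZMod 2) : ℂ := if x = 0 then 1 else -1

/-- Normalization constant `2^{-n/2}`. -/
def nrm (n : ℕ) : ℂ := ((Real.sqrt 2 ^ n : ℝ) : ℂ)⁻¹

/-- Amplitude `⟨a|χ⟩ = (-1)^{χ·a} 2^{-n/2}` of the Fourier basis state `|χ⟩`. -/
def chi {n : ℕ} (χ a : G n) : ℂ := sgn (dot χ a) * nrm n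

/-- KD phase-space point operator `B_{g,χ} = |χ⟩⟨χ|g⟩⟨g|`. -/
def B {n : ℕ} (g χ : G n) : Matrix (G n) (G n) ℂ :=
  Matrix.of fun a b => chi χ a * (starRingEnd ℂ) (chi χ g) * (if b = g then 1 else 0)

/-- Real Pauli string `P_{u,v} = ∏_j Z_j^{v_j} X_j^{u_j}`:
it maps `|b⟩` to `(-1)^{v·(b+u)} |b+u⟩`. -/
def P {n : ℕ} (u v : G n) : Matrix (G n) (G n) ℂ :=
  Matrix.of fun a b => if a = b + u then sgn (dot v a) else 0

/-- The `(ℤ/2ℤ)^n` Kirkwood–Dirac distribution `Q_{g,χ}(ρ) = Tr(B_{g,χ} ρ)`. -/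
def Q {n : ℕ} (ρ : Matrix (G n) (G n) ℂ) (g χ : G n) : ℂ := (B g χ * ρ).trace

/-! Conjugation by `P g χ` permutes the computational basis by `a ↦ a + g` and multiplies entries
by signs, so everything reduces to the entries of `A_{0,0}`. Its `(a, b)` entry is
`2^{-2n} ∑_{v · (a + b) = 0} (-1)^{v · a}`; writing the constraint `v · (a + b) = 0` as the
average of the trivial character and `v ↦ (-1)^{v · (a + b)}`, character orthogonality gives
`2^{-n-1} ([a = 0] + [b = 0])`, the Hermitian part of `B_{0,0} = |+ⁿ⟩⟨+ⁿ|0⟩⟨0|`; and conjugation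
by `P g χ` carries `B_{0,0}` to `B_{g,χ}`. -/

lemma ZMod.two_cases (x : ZMod 2) : x = 0 ∨ x = 1 := by
  revert x; decide

lemma sgn_add (x y : ZMod 2) : sgn (x + y) = sgn x * sgn y := by
  obtain rfl | rfl := ZMod.two_cases x <;> obtain rfl | rfl := ZMod.two_cases y <;>
    simp [sgn, show (1 + 1 : ZMod 2) = 0 from rfl]

lemma star_sgn (x : ZMod 2) : star (sgn x) = sgn x := by
  unfold sgn; split_ifs <;> simp

lemma sgn_eq_one_iff (x : ZMod 2) : sgn x = 1 ↔ x = 0 := by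
  unfold sgn; split_ifs with h <;> norm_num [h]

lemma ite_eq_zero_eq_one_add_sgn_div_two_mul (p : ZMod 2) (x : ℂ) :
    (if p = 0 then x else 0) = (1 + sgn p) / 2 * x := by
  obtain rfl | rfl := ZMod.two_cases p <;> simp [sgn]

lemma star_nrm (n : ℕ) : star (nrm n) = nrm n := by
  simp [nrm, Complex.conj_ofReal]

lemma nrm_mul_self (n : ℕ) : nrm n * nrm n = ((2 : ℂ) ^ n)⁻¹ := by
  rw [nrm, ← mul_inv, ← Complex.ofReal_mul, ← mul_pow, Real.mul_self_sqrt zero_le_two]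
  push_cast; rfl

section

variable {n : ℕ}

namespace G

lemma add_self (w : G n) : w + w = 0 :=
  funext fun j => (by decide : ∀ x : ZMod 2, x + x = 0) (w j)

lemma add_eq_zero_iff {a b : G n} : a + b = 0 ↔ a = b := by
  constructor
  · intro h; simpa [← add_assoc, add_self] using (congrArg (a + ·) h).symm
  · rintro rfl; exact add_self a

lemma eq_add_comm {a b u : G n} : a = b + u ↔ b = a + u := by
  constructor <;> rintro rfl <;> simp [add_assoc, add_self]

end G

lemma dot_eq_dotProduct (u v : G n) : dot u v = u ⬝ᵥ v := rfl

lemma dot_comm (u v : G n) : dot u v = dot v u := dotProduct_comm u v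

lemma dot_add_left (u w v : G n) : dot (u + w) v = dot u v + dot w v := add_dotProduct u w v

def sgnDotChar (c : G n) : AddChar (G n) ℂ where
  toFun v := sgn (dot c v)
  map_zero_eq_one' := by simp [dot_eq_dotProduct, sgn]
  map_add_eq_mul' v w := by simp only [dot_eq_dotProduct, dotProduct_add, sgn_add]

@[simp] lemma sgnDotChar_apply (c v : G n) : sgnDotChar c v = sgn (dot c v) := rfl

lemma sgnDotChar_eq_zero_iff (c : G n) : sgnDotChar c = 0 ↔ c = 0 := by
  refine ⟨fun h => funext fun j => ?_, ?_⟩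
  · simpa [dot_eq_dotProduct, sgn_eq_one_iff] using DFunLike.congr_fun h (Pi.single j 1)
  · rintro rfl; ext v; simp [dot_eq_dotProduct, sgn]

lemma sum_sgn_dot (c : G n) :
    ∑ v : G n, sgn (dot c v) = if c = 0 then (2 : ℂ) ^ n else 0 := by
  simpa [sgnDotChar_eq_zero_iff, Fintype.card_fun] using AddChar.sum_eq_ite (sgnDotChar c)

lemma sum_sgn_dot_of_dot_eq_zero (w c : G n) :
    ∑ v : G n, (if dot w v = 0 then sgn (dot c v) else 0) =
      (2 : ℂ) ^ n / 2 * ((if c = 0 then 1 else 0) + (if c = w then 1 else 0)) := by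
  have average (v : G n) : (if dot w v = 0 then sgn (dot c v) else 0) =
      (sgn (dot c v) + sgn (dot (c + w) v)) / 2 := by
    rw [ite_eq_zero_eq_one_add_sgn_div_two_mul, dot_add_left, sgn_add]; ring
  simp only [average, ← Finset.sum_div, Finset.sum_add_distrib, sum_sgn_dot, G.add_eq_zero_iff]
  split_ifs <;> ring

lemma P_apply_eq_ite (u v a c : G n) : P u v a c = if c = a + u then sgn (dot v a) else 0 := by
  simp only [P, of_apply, G.eq_add_comm]

lemma P_mul_apply (u v : G n) (M : Matrix (G n) (G n) ℂ) (a b : G n) :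
    (P u v * M) a b = sgn (dot v a) * M (a + u) b := by
  simp [mul_apply, P_apply_eq_ite, ite_mul]

lemma mul_conjTranspose_P_apply (u v : G n) (M : Matrix (G n) (G n) ℂ) (a b : G n) :
    (M * (P u v)ᴴ) a b = M a (b + u) * sgn (dot v b) := by
  simp [mul_apply, P_apply_eq_ite, apply_ite star, star_sgn, mul_ite]

lemma P_mul_mul_conjTranspose_apply (u v : G n) (M : Matrix (G n) (G n) ℂ) (a b : G n) :
    (P u v * M * (P u v)ᴴ) a b = sgn (dot v a) * sgn (dot v b) * M (a + u) (b + u) := by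
  rw [mul_conjTranspose_P_apply, P_mul_apply]; ring

lemma sum_P_of_dot_eq_zero_apply (a b : G n) :
    (∑ u : G n, ∑ v : G n, if dot u v = 0 then P u v else 0) a b =
      ∑ v : G n, if dot (a + b) v = 0 then sgn (dot v a) else 0 := by
  simp only [Matrix.sum_apply, apply_ite (fun M : Matrix (G n) (G n) ℂ => M a b), P, of_apply,
    Matrix.zero_apply]
  rw [Finset.sum_comm]
  have shift_eq (u : G n) : a = b + u ↔ u = a + b := by rw [add_comm b, G.eq_add_comm]
  refine Finset.sum_congr rfl fun v _ => ?_
  rw [Finset.sum_eq_single (a + b) (fun u _ hu => by simp [shift_eq, hu]) (by simp)]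
  simp only [shift_eq, if_true]

variable (n) in
/-- The DGBR phase-space point operator `A_{0,0}`. -/
def dgbrOrigin : Matrix (G n) (G n) ℂ :=
  ((2 : ℂ) ^ (2 * n))⁻¹ • ∑ u : G n, ∑ v : G n, if dot u v = 0 then P u v else 0

lemma dgbrOrigin_apply (a b : G n) :
    dgbrOrigin n a b = ((if a = 0 then 1 else 0) + (if b = 0 then 1 else 0)) / 2 ^ (n + 1) := by
  simp only [dgbrOrigin, Matrix.smul_apply, sum_P_of_dot_eq_zero_apply, dot_comm _ a,
    sum_sgn_dot_of_dot_eq_zero, left_eq_add, smul_eq_mul]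
  field_simp
  ring

lemma chi_mul_star_chi (χ a b : G n) :
    chi χ a * star (chi χ b) = sgn (dot χ a) * sgn (dot χ b) / 2 ^ n := by
  rw [chi, chi, star_mul', star_sgn, star_nrm, div_eq_mul_inv, ← nrm_mul_self]; ring

lemma B_apply (g χ a b : G n) :
    B g χ a b = if b = g then sgn (dot χ a) * sgn (dot χ b) / 2 ^ n else 0 := by
  rw [B, of_apply, ← Complex.star_def, chi_mul_star_chi]
  split_ifs with h <;> simp [h]

lemma half_smul_B_add_conjTranspose_apply (g χ a b : G n) :
    ((1 / 2 : ℂ) • (B g χ + (B g χ)ᴴ)) a b =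
      sgn (dot χ a) * sgn (dot χ b) * ((if a = g then 1 else 0) + (if b = g then 1 else 0)) /
        2 ^ (n + 1) := by
  simp only [Matrix.smul_apply, Matrix.add_apply, conjTranspose_apply, B_apply, apply_ite star,
    star_div₀, star_mul', star_sgn, star_zero, star_pow, star_ofNat, smul_eq_mul]
  split_ifs <;> ring

end

/-- the DGBR phase-space point operators
`A_{g,chi} = P_{g,chi} A_{0,0} P_{g,chi}^dagger`, with
`A_{0,0} = 2^(-2n) * sum over u.v = 0 of P_{u,v}`, are the Hermitian parts of the
KD phase-space point operators `B_{g,chi}`. -/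
theorem dgbr_eq_hermitian_part_of_kd (n : ℕ) (g χ : G n) :
    P g χ *
      (((2 : ℂ) ^ (2 * n))⁻¹ •
        ∑ u : G n, ∑ v : G n, if dot u v = 0 then P u v else 0) *
      (P g χ)ᴴ =
    (1 / 2 : ℂ) • (B g χ + (B g χ)ᴴ) := by
  ext a b
  change (P g χ * dgbrOrigin n * (P g χ)ᴴ) a b = _
  rw [P_mul_mul_conjTranspose_apply, dgbrOrigin_apply, half_smul_B_add_conjTranspose_apply]
  simp only [G.add_eq_zero_iff]
  ring
end
end

section
/- CNOT covariance of the KD distribution: Q_{g,χ}(CX_{ct} ρ CX_{ct}†) = Q_{A_{ct}g, B_{ct}χ}(ρ), where (A_{ct})_{jk} = δ_{jk} + δ_{tj}δ_{ck} and (B_{ct})_{jk} = δ_{jk} + δ_{cj}δ_{tk} act linearly on (Z/2Z)^n. -/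
/-!
`CX c t` is the permutation matrix of the involution `A = Amap c t` of the basis labels, so
conjugating `ρ` by it relabels the entries of `ρ` by `A`. Since `B = Bmap c t` is the transpose
of `A`, we have `(B χ) · (A a) = χ · a`, hence `⟨A a|B χ⟩ = ⟨a|χ⟩`; reindexing the trace sum
defining `Q` along `A` gives the covariance.
-/

open scoped BigOperators
open Matrix Kronecker

noncomputable section

/-- Action of CNOT on computational-basis labels: `(A_{ct} g)_j = g_j + delta_{tj} g_c`. -/
def Amap {n : ℕ} (c t : Fin n) (g : G n) : G n :=
  fun j => g j + if j = t then g c else 0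

/-- Action of CNOT on Fourier-basis labels: `(B_{ct} chi)_j = chi_j + delta_{cj} chi_t`. -/
def Bmap {n : ℕ} (c t : Fin n) (χ : G n) : G n :=
  fun j => χ j + if j = c then χ t else 0

/-- The CNOT gate with control c and target t: it maps `|b>` to `|A_{ct} b>`. -/
def CX {n : ℕ} (c t : Fin n) : Matrix (G n) (G n) ℂ :=
  Matrix.of fun a b => if a = Amap c t b then 1 else 0


lemma Matrix.permMatrix_mul_mul_conjTranspose_permMatrix {m R : Type*} [Fintype m]
    [DecidableEq m] [NonAssocSemiring R] [StarRing R] (σ : Equiv.Perm m) (M : Matrix m m R) :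
    σ.permMatrix R * M * (σ.permMatrix R)ᴴ = M.submatrix σ σ := by
  rw [conjTranspose_permMatrix, Equiv.Perm.permMatrix, Equiv.Perm.permMatrix,
    PEquiv.toMatrix_toPEquiv_mul, PEquiv.mul_toMatrix_toPEquiv]
  rfl

lemma Q_eq_sum {n : ℕ} (ρ : Matrix (G n) (G n) ℂ) (g χ : G n) :
    Q ρ g χ = ∑ a, chi χ a * starRingEnd ℂ (chi χ g) * ρ g a := by
  simp [Q, Matrix.trace, Matrix.mul_apply, B, ite_mul, mul_assoc]

lemma Q_submatrix {n : ℕ} (σ : Equiv.Perm (G n)) {χ χ' : G n}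
    (hdot : ∀ a, dot χ' (σ a) = dot χ a) (ρ : Matrix (G n) (G n) ℂ) (g : G n) :
    Q (ρ.submatrix σ σ) g χ = Q ρ (σ g) χ' := by
  have hchi (a : G n) : chi χ' (σ a) = chi χ a := by rw [chi, chi, hdot]
  rw [Q_eq_sum, Q_eq_sum, ← Equiv.sum_comp σ (fun b => chi χ' b * _ * ρ (σ g) b)]
  simp only [Matrix.submatrix_apply, hchi]

section CNOT

variable {n : ℕ} {c t : Fin n}

lemma Amap_involutive (hct : c ≠ t) : Function.Involutive (Amap c t) := by
  intro g
  funext j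
  by_cases hj : j = t
  · subst hj
    simp [Amap, hct, add_assoc, CharTwo.add_self_eq_zero]
  · simp [Amap, hj]

lemma dot_Amap (χ a : G n) : dot χ (Amap c t a) = dot (Bmap c t χ) a := by
  simp only [dot, Amap, Bmap, mul_add, add_mul, Finset.sum_add_distrib]
  congr 1
  simp [mul_ite, mul_comm]

lemma dot_Bmap_Amap (hct : c ≠ t) (χ a : G n) : dot (Bmap c t χ) (Amap c t a) = dot χ a := by
  rw [← dot_Amap, Amap_involutive hct]

lemma CX_eq_permMatrix (hct : c ≠ t) :
    CX c t = ((Amap_involutive hct).toPerm (Amap c t)).permMatrix ℂ := by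
  ext a b
  simp only [CX, Matrix.of_apply, PEquiv.toMatrix_apply, Equiv.toPEquiv_apply,
    Function.Involutive.coe_toPerm, Option.mem_def, Option.some.injEq]
  exact if_congr (Amap_involutive hct).eq_iff.symm rfl rfl

end CNOT

/-- CNOT covariance of the KD distribution. -/
theorem kd_cnot_covariance {n : ℕ} (c t : Fin n) (hct : c ≠ t)
    (ρ : Matrix (G n) (G n) ℂ) (g χ : G n) :
    Q (CX c t * ρ * (CX c t)ᴴ) g χ = Q ρ (Amap c t g) (Bmap c t χ) := by
  rw [CX_eq_permMatrix hct, Matrix.permMatrix_mul_mul_conjTranspose_permMatrix]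
  exact Q_submatrix _ (dot_Bmap_Amap hct χ) ρ g
end
end
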